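/- For all λ > 0 and θ ≥ 0, the difference between the excess kurtosis of the generalized Poisson and negative binomial distributions with matched mean λ and variance λ(1+θ)^2 equals (9θ^4 + 16θ^3 + 6θ^2)/(λ(θ+1)^2), which is nonnegative, and strictly positive when θ > 0. -/

import Mathlib

/-- The difference between the matched GP and NB excess kurtoses equals
(9θ⁴ + 16θ³ + 6θ²)/(λ(θ+1)²), which is nonnegative, and positive for θ > 0. -/
theorem gp_nb_kurtosis_difference (lam θ : ℝ) (hlam : 0 < lam) (hθ : 0 ≤ θ) :
    (1 / lam + (15 * θ ^ 2 + 10 * θ) / lam) -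
      (1 / lam + (6 * θ ^ 4 + 24 * θ ^ 3 + 29 * θ ^ 2 + 10 * θ) /
        (lam * (θ + 1) ^ 2))
      = (9 * θ ^ 4 + 16 * θ ^ 3 + 6 * θ ^ 2) / (lam * (θ + 1) ^ 2) ∧
    0 ≤ (9 * θ ^ 4 + 16 * θ ^ 3 + 6 * θ ^ 2) / (lam * (θ + 1) ^ 2) ∧
    (0 < θ → 0 < (9 * θ ^ 4 + 16 * θ ^ 3 + 6 * θ ^ 2) / (lam * (θ + 1) ^ 2)) := by
  have hθ1 : θ + 1 ≠ 0 := by positivity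
  refine ⟨?_, by positivity, fun hθpos => by positivity⟩
  field_simp
  ring
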